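/- arXiv:2004.10903 — 6 statements merged into one kernel-verified Lean document; each statement's English description precedes it below -/
import Mathlib

section
/- Let n ≥ 2, ω = exp(2πi/n), let Aₙ ∈ Mₙ(ℂ) be the diagonal matrix with (Aₙ)_{jj} = ω^j for j = 0,…,n−1, let Fₙ be the Fourier matrix with entries (Fₙ)_{jk} = ω^{jk}, and set B = (1/n)·Fₙᴴ Aₙ Fₙ. Then for all (x,y,z) ∈ ℂ³ one has det(x·Aₙ + y·B + z·AₙB − I) = 0 if and only if xⁿ + yⁿ + (−1)^{n−1} zⁿ = 1. -/
open Matrix Complex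

noncomputable section

/-!
Conjugating the diagonal matrix `A = diag(ωʲ)` by the Fourier matrix turns it into the cyclic
shift `S`, so `B = S` and `x A + y B + z A B - I = (x A - I) + (y I + z A) S` has nonzero entries
only on the diagonal and on the cyclic subdiagonal. Expanding along the first row, such a matrix has
determinant `∏ dⱼ + (-1)ⁿ⁻¹ ∏ cⱼ`, and both products run over the `n`-th roots of unity, where
`∏ⱼ (u - ωʲ v) = uⁿ - vⁿ`. This gives
`det = (-1)ⁿ⁻¹ (xⁿ + yⁿ + (-1)ⁿ⁻¹ zⁿ - 1)`.
-/

open Finset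

theorem Fin.lt_or_eq_zero_of_eq_add_one {m : ℕ} {a b : Fin (m + 1)} (h : a = b + 1) :
    b < a ∨ a = 0 := by
  by_cases hb : b = Fin.last m
  · exact .inr (by rw [h, hb, Fin.last_add_one])
  · exact .inl (h ▸ Fin.lt_add_one_iff.2 (Fin.lt_last_iff_ne_last.2 hb))

namespace Matrix

variable {R : Type*}

/-- `c 0` sits in the top right corner. -/
def cyclicBidiagonal [Zero R] {n : ℕ} [NeZero n] (d c : Fin n → R) : Matrix (Fin n) (Fin n) R :=
  of fun j k => if j = k then d j else if j = k + 1 then c j else 0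

section Algebra

variable {n : ℕ} [NeZero n]

theorem cyclicBidiagonal_add [AddZeroClass R] (d c d' c' : Fin n → R) :
    cyclicBidiagonal d c + cyclicBidiagonal d' c' = cyclicBidiagonal (d + d') (c + c') := by
  ext j k; simp only [cyclicBidiagonal, add_apply, of_apply, Pi.add_apply]; split_ifs <;> simp

theorem cyclicBidiagonal_sub [SubNegZeroMonoid R] (d c d' c' : Fin n → R) :
    cyclicBidiagonal d c - cyclicBidiagonal d' c' = cyclicBidiagonal (d - d') (c - c') := by
  ext j k; simp only [cyclicBidiagonal, sub_apply, of_apply, Pi.sub_apply]; split_ifs <;> simp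

theorem smul_cyclicBidiagonal [Zero R] {S : Type*} [SMulZeroClass S R] (s : S)
    (d c : Fin n → R) :
    s • cyclicBidiagonal d c = cyclicBidiagonal (s • d) (s • c) := by
  ext j k; simp only [cyclicBidiagonal, smul_apply, of_apply, Pi.smul_apply]; split_ifs <;> simp

theorem diagonal_mul_cyclicBidiagonal [NonUnitalNonAssocSemiring R] (a d c : Fin n → R) :
    diagonal a * cyclicBidiagonal d c = cyclicBidiagonal (a * d) (a * c) := by
  ext j k; simp only [cyclicBidiagonal, diagonal_mul, of_apply, Pi.mul_apply]; split_ifs <;> simp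

theorem diagonal_eq_cyclicBidiagonal [Zero R] (d : Fin n → R) :
    diagonal d = cyclicBidiagonal d 0 := by
  ext j k; simp only [cyclicBidiagonal, diagonal_apply, of_apply, Pi.zero_apply]; split_ifs <;> rfl

theorem one_eq_cyclicBidiagonal [Zero R] [One R] :
    (1 : Matrix (Fin n) (Fin n) R) = cyclicBidiagonal 1 0 :=
  diagonal_eq_cyclicBidiagonal 1

end Algebra

section Det

variable [CommRing R] {m : ℕ}

theorem det_cyclicBidiagonal_submatrix_succ_succ (d c : Fin (m + 2) → R) :
    ((cyclicBidiagonal d c).submatrix Fin.succ Fin.succ).det = ∏ i : Fin (m + 1), d i.succ := by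
  rw [det_of_isLowerTriangular]
  · simp [cyclicBidiagonal]
  intro i j hij
  have hij : i < j := hij
  simp only [cyclicBidiagonal, submatrix_apply, of_apply, Fin.succ_inj, hij.ne, if_false]
  refine if_neg fun h => ?_
  rcases Fin.lt_or_eq_zero_of_eq_add_one h with h | h
  · exact (Fin.succ_lt_succ_iff.1 h).not_gt hij
  · exact Fin.succ_ne_zero i h

theorem det_cyclicBidiagonal_submatrix_succ_castSucc (d c : Fin (m + 2) → R) :
    ((cyclicBidiagonal d c).submatrix Fin.succ Fin.castSucc).det =
      ∏ i : Fin (m + 1), c i.succ := by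
  rw [det_of_isUpperTriangular]
  · simp [cyclicBidiagonal, Fin.coeSucc_eq_succ, Fin.castSucc_lt_succ.ne']
  intro i j hij
  have hji : j < i := hij
  simp only [cyclicBidiagonal, submatrix_apply, of_apply, Fin.coeSucc_eq_succ, Fin.succ_inj,
    hji.ne', if_false]
  exact if_neg ((Fin.castSucc_lt_castSucc_iff.2 hji).trans Fin.castSucc_lt_succ).ne'

theorem det_cyclicBidiagonal (d c : Fin (m + 2) → R) :
    (cyclicBidiagonal d c).det = ∏ j, d j + (-1) ^ (m + 1) * ∏ j, c j := by
  have hcorner : cyclicBidiagonal d c 0 (Fin.last (m + 1)) = c 0 := by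
    simp [cyclicBidiagonal, Fin.last_add_one, Fin.last_pos.ne]
  have hmiddle (i : Fin m) : cyclicBidiagonal d c 0 i.castSucc.succ = 0 := by
    have hwrap : i.castSucc.succ + 1 ≠ 0 := by
      rw [Fin.succ_castSucc, Fin.coeSucc_eq_succ]
      exact Fin.succ_ne_zero _
    simp only [cyclicBidiagonal, of_apply]
    rw [if_neg (Fin.succ_ne_zero _).symm, if_neg hwrap.symm]
  have hfirst : cyclicBidiagonal d c 0 0 = d 0 := by simp [cyclicBidiagonal]
  rw [det_succ_row_zero, Fin.sum_univ_succ, Fin.sum_univ_castSucc, Fin.prod_univ_succ d,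
    Fin.prod_univ_succ c]
  simp only [hmiddle, Fin.succAbove_zero, Fin.succ_last, Fin.succAbove_last,
    det_cyclicBidiagonal_submatrix_succ_succ, det_cyclicBidiagonal_submatrix_succ_castSucc,
    mul_zero, zero_mul, sum_const_zero, zero_add, hfirst, hcorner, Fin.val_zero, Fin.val_last,
    pow_zero, one_mul, Nat.succ_eq_add_one]
  ring

end Det

def fourierMatrix [Monoid R] (ζ : R) (n : ℕ) : Matrix (Fin n) (Fin n) R :=
  of fun j k => ζ ^ ((j : ℕ) * (k : ℕ))

end Matrix

theorem geom_sum_fin_of_pow_eq_one {K : Type*} [Field K] [DecidableEq K] {η : K} {n : ℕ}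
    (h : η ^ n = 1) : ∑ l : Fin n, η ^ (l : ℕ) = if η = 1 then (n : K) else 0 := by
  rw [Fin.sum_univ_eq_sum_range (η ^ ·)]
  split_ifs with hη
  · simp [hη]
  · rw [geom_sum_eq hη, h, sub_self, zero_div]

namespace IsPrimitiveRoot

theorem pow_val_add_one_eq_pow_iff {M : Type*} [CommMonoid M] {ζ : M} {n : ℕ} [NeZero n]
    (h : IsPrimitiveRoot ζ n) (j k : Fin n) :
    ζ ^ ((k : ℕ) + 1) = ζ ^ (j : ℕ) ↔ j = k + 1 := by
  have hval : ζ ^ ((k + 1 : Fin n) : ℕ) = ζ ^ ((k : ℕ) + 1) := by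
    have := pow_mod_orderOf ζ ((k : ℕ) + 1)
    rwa [← h.eq_orderOf, ← Nat.add_mod_mod, ← Fin.val_one', ← Fin.val_add] at this
  rw [← hval, eq_comm]
  exact ⟨fun hkj => Fin.ext (h.pow_inj j.isLt (k + 1).isLt hkj), fun hjk => hjk ▸ rfl⟩

theorem prod_sub_pow_mul {K : Type*} [CommRing K] [IsDomain K] {ζ : K} {n : ℕ} [NeZero n]
    (h : IsPrimitiveRoot ζ n) (u v : K) :
    ∏ j : Fin n, (u - ζ ^ (j : ℕ) * v) = u ^ n - v ^ n := by
  have hn := Nat.pos_of_neZero n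
  rw [h.pow_sub_pow_eq_prod_sub_mul u v hn]
  refine prod_nbij (fun j => ζ ^ (j : ℕ)) (fun j _ => ?_) (fun i _ j _ hij => ?_)
    (fun η hη => ?_) fun _ _ => rfl
  · rw [Polynomial.mem_nthRootsFinset hn, ← pow_mul, mul_comm, pow_mul, h.pow_eq_one, one_pow]
  · exact Fin.ext (h.pow_inj i.isLt j.isLt hij)
  · obtain ⟨i, hi, rfl⟩ := h.eq_pow_of_pow_eq_one ((Polynomial.mem_nthRootsFinset hn 1).1 hη)
    exact ⟨⟨i, hi⟩, mem_coe.2 (mem_univ _), rfl⟩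

theorem fourierMatrix_conjTranspose_mul_diagonal_mul {ζ : ℂ} {m : ℕ}
    (h : IsPrimitiveRoot ζ (m + 2)) :
    ((1 : ℂ) / (m + 2 : ℕ)) • ((fourierMatrix ζ (m + 2))ᴴ *
      diagonal (fun j : Fin (m + 2) => ζ ^ (j : ℕ)) * fourierMatrix ζ (m + 2)) =
      cyclicBidiagonal 0 1 := by
  have hstar : star ζ = ζ⁻¹ := (Complex.inv_eq_conj (h.norm'_eq_one (by omega))).symm
  have hζ : ζ ≠ 0 := h.ne_zero (by omega)
  have hn : (m + 2 : ℂ) ≠ 0 := by norm_cast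
  ext j k
  set η := ζ ^ ((k : ℕ) + 1) * (ζ ^ (j : ℕ))⁻¹
  have hentry : ((fourierMatrix ζ (m + 2))ᴴ * diagonal (fun j : Fin (m + 2) => ζ ^ (j : ℕ)) *
      fourierMatrix ζ (m + 2)) j k = ∑ l : Fin (m + 2), η ^ (l : ℕ) := by
    rw [mul_apply]
    simp only [mul_diagonal, conjTranspose_apply, fourierMatrix, of_apply, star_pow, hstar]
    refine sum_congr rfl fun l _ => ?_
    field_simp
    ring
  have hη : η ^ (m + 2) = 1 := by
    simp only [η, mul_pow, inv_pow, ← pow_mul]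
    rw [mul_comm _ (m + 2), mul_comm (j : ℕ), pow_mul, pow_mul, h.pow_eq_one, one_pow, one_pow,
      inv_one, mul_one]
  have hη1 : η = 1 ↔ j = k + 1 := by
    rw [mul_inv_eq_one₀ (pow_ne_zero _ hζ), h.pow_val_add_one_eq_pow_iff]
  rw [Matrix.smul_apply, hentry, geom_sum_fin_of_pow_eq_one hη]
  simp only [cyclicBidiagonal, of_apply, Pi.zero_apply, Pi.one_apply, hη1]
  split_ifs <;> simp_all

end IsPrimitiveRoot

theorem stmt_0 (n : ℕ) (hn : 2 ≤ n)
    (ω : ℂ) (hω : ω = Complex.exp (2 * Real.pi * Complex.I / n))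
    (A F B : Matrix (Fin n) (Fin n) ℂ)
    (hA : A = Matrix.diagonal (fun j : Fin n => ω ^ (j : ℕ)))
    (hF : F = Matrix.of (fun j k : Fin n => ω ^ ((j : ℕ) * (k : ℕ))))
    (hB : B = ((1 : ℂ) / n) • (Fᴴ * A * F)) :
    ∀ x y z : ℂ,
      (x • A + y • B + z • (A * B) - 1).det = 0 ↔
        x ^ n + y ^ n + (-1 : ℂ) ^ (n - 1) * z ^ n = 1 := by
  intro x y z
  obtain ⟨m, rfl⟩ : ∃ m, n = m + 2 := ⟨n - 2, by omega⟩
  have hprim : IsPrimitiveRoot ω (m + 2) := hω ▸ Complex.isPrimitiveRoot_exp _ (by omega)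
  have hshift : B = cyclicBidiagonal 0 1 := by
    rw [hB, hA, hF]
    exact hprim.fourierMatrix_conjTranspose_mul_diagonal_mul
  have hM : x • A + y • B + z • (A * B) - 1 =
      cyclicBidiagonal (fun j => x * ω ^ (j : ℕ) - 1) (fun j => y + z * ω ^ (j : ℕ)) := by
    rw [hshift, hA, diagonal_mul_cyclicBidiagonal, diagonal_eq_cyclicBidiagonal,
      one_eq_cyclicBidiagonal]
    simp only [smul_cyclicBidiagonal, cyclicBidiagonal_add, cyclicBidiagonal_sub]
    congr 1 <;> funext j <;> simp
  have hdiag : ∏ j : Fin (m + 2), (x * ω ^ (j : ℕ) - 1) = (-1) ^ (m + 2) * (1 - x ^ (m + 2)) :=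
    calc ∏ j : Fin (m + 2), (x * ω ^ (j : ℕ) - 1)
        = ∏ j : Fin (m + 2), -(1 - ω ^ (j : ℕ) * x) := prod_congr rfl fun j _ => by ring
      _ = (-1) ^ (m + 2) * (1 - x ^ (m + 2)) := by
        rw [prod_neg, card_univ, Fintype.card_fin, hprim.prod_sub_pow_mul, one_pow]
  have hsubdiag : ∏ j : Fin (m + 2), (y + z * ω ^ (j : ℕ)) = y ^ (m + 2) - (-z) ^ (m + 2) := by
    rw [← hprim.prod_sub_pow_mul]
    exact prod_congr rfl fun j _ => by ring
  have hdet : (-1) ^ (m + 2) * (1 - x ^ (m + 2)) + (-1) ^ (m + 1) * (y ^ (m + 2) - (-z) ^ (m + 2))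
      = (-1) ^ (m + 1) * (x ^ (m + 2) + y ^ (m + 2) + (-1) ^ (m + 1) * z ^ (m + 2) - 1) := by
    rw [neg_pow z]
    ring
  rw [hM, det_cyclicBidiagonal, hdiag, hsubdiag, hdet, mul_eq_zero, sub_eq_zero,
    or_iff_right (pow_ne_zero _ (neg_ne_zero.2 one_ne_zero))]
  rfl
end
end

section
/- Let n ≥ 2, ω = exp(2πi/n), let Aₙ ∈ Mₙ(ℂ) be the diagonal matrix with (Aₙ)_{jj} = ω^j for j = 0,…,n−1, let Fₙ be the Fourier matrix with entries (Fₙ)_{jk} = ω^{jk}, and set B = (1/n)·Fₙᴴ Aₙ Fₙ. Then for all (x,y,z₁,z₂) ∈ ℂ⁴ one has det(x·Aₙ + y·B + z₁·AₙB + z₂·BAₙ − I) = 0 if and only if xⁿ + yⁿ + (−1)^{n−1}(ω z₁ + z₂)ⁿ = 1. -/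
open Matrix Complex

noncomputable section

lemma key_prod' {n : ℕ} (hn : 0 < n) {ω : ℂ} (hprim : IsPrimitiveRoot ω n) (t c : ℂ) :
    (∏ i ∈ Finset.range n, (t - ω ^ i * c)) = t ^ n - c ^ n := by
  have h := X_pow_sub_C_eq_prod hprim hn (rfl : c ^ n = c ^ n)
  have h2 := congrArg (Polynomial.eval t) h
  simpa [Polynomial.eval_prod] using h2.symm

lemma det_bidiag (m : ℕ) (hm : 1 ≤ m) (d s : Fin (m+1) → ℂ) :
    (Matrix.of fun j k : Fin (m+1) => if j = k then d j
      else if (j:ℕ) = ((k:ℕ)+1) % (m+1) then s k else 0).det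
    = (∏ j, d j) + (-1)^m * ∏ j, s j := by
  set M : Matrix (Fin (m+1)) (Fin (m+1)) ℂ :=
    Matrix.of fun j k : Fin (m+1) => if j = k then d j
      else if (j:ℕ) = ((k:ℕ)+1) % (m+1) then s k else 0 with hM
  have hMapp : ∀ j k : Fin (m+1), M j k = if j = k then d j
      else if (j:ℕ) = ((k:ℕ)+1) % (m+1) then s k else 0 := fun j k => rfl
  rw [Matrix.det_succ_row_zero]
  have hzero : ∀ j : Fin (m+1), j ≠ 0 → j ≠ Fin.last m →
      (-1 : ℂ)^(j:ℕ) * M 0 j * (M.submatrix Fin.succ j.succAbove).det = 0 := by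
    intro j hj0 hjl
    have h1 : M 0 j = 0 := by
      rw [hMapp, if_neg (Ne.symm hj0), if_neg]
      intro h
      simp only [Fin.val_zero] at h
      have hjv : (j:ℕ) < m + 1 := j.isLt
      have hjv0 : (j:ℕ) ≠ 0 := fun hh => hj0 (Fin.ext hh)
      have hjvl : (j:ℕ) ≠ m := fun hh => hjl (by apply Fin.ext; rw [hh, Fin.val_last])
      rcases Nat.lt_or_ge ((j:ℕ)+1) (m+1) with h2 | h2
      · rw [Nat.mod_eq_of_lt h2] at h; omega
      · have : (j:ℕ)+1 = m+1 := by omega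
        rw [this, Nat.mod_self] at h; omega
    rw [h1]; ring
  rw [← Finset.add_sum_erase _ _ (Finset.mem_univ (0 : Fin (m+1)))]
  have hlast_mem : Fin.last m ∈ (Finset.univ.erase (0 : Fin (m+1))) := by
    rw [Finset.mem_erase]
    refine ⟨?_, Finset.mem_univ _⟩
    intro h
    have := congrArg Fin.val h
    simp at this
    omega
  rw [Finset.sum_eq_single_of_mem (Fin.last m) hlast_mem
    (fun b hb hbl => hzero b (Finset.ne_of_mem_erase hb) hbl)]
  -- term at 0
  have hsub1 : (M.submatrix Fin.succ ((0 : Fin (m+1)).succAbove)).det = ∏ i : Fin m, d i.succ := by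
    rw [Fin.succAbove_zero]
    rw [Matrix.det_of_lowerTriangular _ ?_]
    · apply Finset.prod_congr rfl
      intro i _
      rw [Matrix.submatrix_apply, hMapp, if_pos rfl]
    · intro i j hij
      have hij' : i < j := hij
      rw [Matrix.submatrix_apply, hMapp, if_neg, if_neg]
      · have hj : (j:ℕ) < m := j.isLt
        have hlt : (i:ℕ) < (j:ℕ) := hij'
        rcases Nat.lt_or_ge ((j:ℕ)+1+1) (m+1) with h2 | h2
        · rw [Fin.val_succ, Fin.val_succ, Nat.mod_eq_of_lt h2]; omega
        · have he : (j:ℕ)+1+1 = m+1 := by omega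
          rw [Fin.val_succ, Fin.val_succ, he, Nat.mod_self]; omega
      · intro h
        exact absurd (Fin.succ_injective _ h) hij'.ne
  have hsub2 : (M.submatrix Fin.succ ((Fin.last m).succAbove)).det = ∏ i : Fin m, s i.castSucc := by
    rw [Fin.succAbove_last]
    rw [Matrix.det_of_upperTriangular ?_]
    · apply Finset.prod_congr rfl
      intro i _
      rw [Matrix.submatrix_apply, hMapp, if_neg, if_pos]
      · rw [Fin.val_succ, Fin.coe_castSucc, Nat.mod_eq_of_lt (by omega)]
      · intro h
        have := congrArg Fin.val h
        rw [Fin.val_succ, Fin.coe_castSucc] at this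
        omega
    · intro i j hij
      have hij' : (j:ℕ) < (i:ℕ) := hij
      rw [Matrix.submatrix_apply, hMapp, if_neg, if_neg]
      · rw [Fin.val_succ, Fin.coe_castSucc, Nat.mod_eq_of_lt (by omega)]
        omega
      · intro h
        have := congrArg Fin.val h
        rw [Fin.val_succ, Fin.coe_castSucc] at this
        omega
  rw [hsub1, hsub2]
  have hM00 : M 0 0 = d 0 := by rw [hMapp, if_pos rfl]
  have hM0l : M 0 (Fin.last m) = s (Fin.last m) := by
    rw [hMapp, if_neg, if_pos]
    · rw [Fin.val_last, Fin.val_zero, Nat.mod_self]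
    · intro h
      have := congrArg Fin.val h
      simp at this
      omega
  rw [hM00, hM0l]
  rw [Fin.prod_univ_succ d, Fin.prod_univ_castSucc s]
  simp [Fin.val_last]
  ring

theorem stmt_1 (n : ℕ) (hn : 2 ≤ n)
    (ω : ℂ) (hω : ω = Complex.exp (2 * Real.pi * Complex.I / n))
    (A F B : Matrix (Fin n) (Fin n) ℂ)
    (hA : A = Matrix.diagonal (fun j : Fin n => ω ^ (j : ℕ)))
    (hF : F = Matrix.of (fun j k : Fin n => ω ^ ((j : ℕ) * (k : ℕ))))
    (hB : B = ((1 : ℂ) / n) • (Fᴴ * A * F)) :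
    ∀ x y z₁ z₂ : ℂ,
      (x • A + y • B + z₁ • (A * B) + z₂ • (B * A) - 1).det = 0 ↔
        x ^ n + y ^ n + (-1 : ℂ) ^ (n - 1) * (ω * z₁ + z₂) ^ n = 1 := by
  intro x y z₁ z₂
  have hn0 : n ≠ 0 := by omega
  have hprim : IsPrimitiveRoot ω n := by
    rw [hω]; exact Complex.isPrimitiveRoot_exp n hn0
  have hω1 : ω ^ n = 1 := hprim.pow_eq_one
  have hω0 : ω ≠ 0 := hprim.ne_zero hn0
  have hnC : (n : ℂ) ≠ 0 := Nat.cast_ne_zero.mpr hn0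
  have hconj : (starRingEnd ℂ) ω = ω⁻¹ :=
    (Complex.inv_eq_conj (Complex.norm_eq_one_of_pow_eq_one hω1 hn0)).symm
  have hpm : ∀ m : ℕ, ω ^ (m % n) = ω ^ m := by
    intro m
    conv_rhs => rw [← Nat.div_add_mod m n]
    rw [pow_add, pow_mul, hω1, one_pow, one_mul]
  -- B is the cyclic shift matrix
  have hBe : ∀ j k : Fin n, B j k = if (j : ℕ) = ((k : ℕ) + 1) % n then 1 else 0 := by
    intro j k
    set ζ : ℂ := ω ^ ((k : ℕ) + 1) * (ω ^ (j : ℕ))⁻¹ with hζ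
    have hterm : ∀ l : Fin n, (Fᴴ * A) j l * F l k = ζ ^ (l : ℕ) := by
      intro l
      rw [Matrix.mul_apply]
      rw [Finset.sum_eq_single l]
      · rw [hA, hF, Matrix.conjTranspose_apply, Matrix.diagonal_apply_eq]
        simp only [Matrix.of_apply, star_pow]
        have hst : (star ω) = ω⁻¹ := hconj
        rw [hst, hζ, mul_pow, inv_pow, inv_pow, ← pow_mul, ← pow_mul]
        field_simp
        rw [← pow_add, ← pow_add, ← pow_add]
        congr 1
        ring
      · intro b _ hb
        rw [hA, Matrix.diagonal_apply_ne _ hb]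
        simp
      · simp
    have hsum : (Fᴴ * A * F) j k = ∑ l ∈ Finset.range n, ζ ^ l := by
      rw [Matrix.mul_apply]
      simp_rw [hterm]
      exact Fin.sum_univ_eq_sum_range (fun l => ζ ^ l) n
    have hzn : ζ ^ n = 1 := by
      rw [hζ, mul_pow, inv_pow, ← pow_mul, ← pow_mul, mul_comm ((k:ℕ)+1) n,
        mul_comm (j:ℕ) n, pow_mul, pow_mul, hω1, one_pow, one_pow, inv_one, mul_one]
    have hiff : ζ = 1 ↔ (j : ℕ) = ((k : ℕ) + 1) % n := by
      rw [hζ, mul_inv_eq_one₀ (pow_ne_zero _ hω0)]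
      constructor
      · intro h
        have h2 : ω ^ (((k : ℕ) + 1) % n) = ω ^ ((j : ℕ) % n) := by
          rw [hpm, hpm]; exact h
        have := hprim.pow_inj (Nat.mod_lt _ (by omega)) (Nat.mod_lt _ (by omega)) h2
        rw [Nat.mod_eq_of_lt j.isLt] at this
        omega
      · intro h
        rw [h, hpm]
    rw [hB, Matrix.smul_apply, hsum, smul_eq_mul]
    by_cases hone : ζ = 1
    · rw [if_pos (hiff.mp hone), hone]
      simp [hnC]
    · rw [if_neg (fun h => hone (hiff.mpr h))]
      rw [geom_sum_eq hone, hzn, sub_self, zero_div, mul_zero]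
  set w : ℂ := ω * z₁ + z₂ with hw
  -- the matrix entrywise
  have hM : x • A + y • B + z₁ • (A * B) + z₂ • (B * A) - 1 =
      Matrix.of (fun j k : Fin n => if j = k then x * ω ^ (j:ℕ) - 1
        else if (j:ℕ) = ((k:ℕ)+1) % n then y + w * ω ^ (k:ℕ) else 0) := by
    ext j k
    have hAB : (A * B) j k = ω ^ (j:ℕ) * B j k := by
      rw [hA, Matrix.diagonal_mul]
    have hBA : (B * A) j k = B j k * ω ^ (k:ℕ) := by
      rw [hA, Matrix.mul_diagonal]
    simp only [Matrix.sub_apply, Matrix.add_apply, Matrix.smul_apply, smul_eq_mul,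
      Matrix.one_apply, Matrix.of_apply, hAB, hBA, hBe j k]
    by_cases hjk : j = k
    · subst hjk
      have hne : ¬ ((j:ℕ) = ((j:ℕ)+1) % n) := by
        intro h
        have hjv : (j:ℕ) < n := j.isLt
        rcases Nat.lt_or_ge ((j:ℕ)+1) n with h2 | h2
        · rw [Nat.mod_eq_of_lt h2] at h; omega
        · have : (j:ℕ)+1 = n := by omega
          rw [this, Nat.mod_self] at h; omega
      rw [hA, Matrix.diagonal_apply_eq]
      simp only [if_pos rfl, if_neg hne, if_true, eq_self_iff_true]
      ring
    · rw [hA, Matrix.diagonal_apply_ne _ hjk]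
      simp only [if_neg hjk]
      by_cases hsh : (j:ℕ) = ((k:ℕ)+1) % n
      · have hωj : ω ^ (j:ℕ) = ω ^ ((k:ℕ)+1) := by rw [hsh, hpm]
        simp only [if_pos hsh, hωj]
        rw [pow_succ, hw]
        ring
      · simp only [if_neg hsh]
        ring
  rw [hM]
  -- determinant
  obtain ⟨m, rfl⟩ : ∃ m, n = m + 1 := ⟨n - 1, by omega⟩
  have hm : 1 ≤ m := by omega
  rw [det_bidiag m hm (fun j => x * ω ^ (j:ℕ) - 1) (fun k => y + w * ω ^ (k:ℕ))]
  rw [Fin.prod_univ_eq_prod_range (fun j => x * ω ^ j - 1) (m+1),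
    Fin.prod_univ_eq_prod_range (fun j => y + w * ω ^ j) (m+1)]
  have hp1 : (∏ i ∈ Finset.range (m+1), (x * ω ^ i - 1)) = (-1)^(m+1) * (1 - x^(m+1)) := by
    have : ∀ i ∈ Finset.range (m+1), x * ω ^ i - 1 = (-1) * (1 - ω ^ i * x) := by
      intro i _; ring
    rw [Finset.prod_congr rfl this, Finset.prod_mul_distrib, Finset.prod_const,
      Finset.card_range, key_prod' (by omega) hprim 1 x, one_pow]
  have hp2 : (∏ i ∈ Finset.range (m+1), (y + w * ω ^ i)) = y^(m+1) - (-w)^(m+1) := by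
    have : ∀ i ∈ Finset.range (m+1), y + w * ω ^ i = y - ω ^ i * (-w) := by
      intro i _; ring
    rw [Finset.prod_congr rfl this, key_prod' (by omega) hprim y (-w)]
  rw [hp1, hp2]
  have hcn : ((-1:ℂ))^m ≠ 0 := pow_ne_zero _ (neg_ne_zero.mpr one_ne_zero)
  have hdet : (-1:ℂ)^(m+1) * (1 - x^(m+1)) + (-1)^m * (y^(m+1) - (-w)^(m+1))
      = (-1)^m * (x^(m+1) + y^(m+1) + (-1)^m * w^(m+1) - 1) := by
    rw [neg_pow w]
    ring
  have hms : m + 1 - 1 = m := by omega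
  rw [hdet, hms, mul_eq_zero]
  simp only [hcn, false_or]
  exact sub_eq_zero
end
end

section
/- Let n ≥ 2 and let A, B ∈ Mₙ(ℂ) be such that A is normal, the operator norm of B (acting on ℂⁿ with the Euclidean norm) equals 1, and {(x,y,z) ∈ ℂ³ : det(x·A + y·B + z·AB − I) = 0} = {(x,y,z) ∈ ℂ³ : xⁿ + yⁿ + (−1)^{n−1} zⁿ = 1}. Then A and B are both unitary, and the characteristic polynomial of A and the characteristic polynomial of B are each equal to Xⁿ − 1; in particular the spectra of A and of B each consist of all n-th roots of unity, each an eigenvalue of multiplicity one. -/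
/-!
Restricting the joint spectrum to the coordinate axes gives `det (x • A - 1) = 0` for every
`n`-th root of unity `x`, so the monic degree-`n` polynomial `A.charpoly` vanishes at all `n`-th
roots of unity and equals `X ^ n - 1`; likewise for `B`. By Cayley–Hamilton `A ^ n = B ^ n = 1`.
A normal element whose spectrum lies on the unit circle is unitary. For `B`, the contractions
`B` and `B ^ (n - 1)` are inverse to each other, so `B` preserves norms and is therefore unitary.
-/

open Matrix Complex Polynomial

theorem Polynomial.eq_X_pow_sub_one_of_isRoot {K : Type*} [Field K] {n : ℕ} (hn : 0 < n)
    {ζ : K} (hζ : IsPrimitiveRoot ζ n) {p : K[X]} (hp : p.Monic) (hdeg : p.natDegree ≤ n)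
    (hroots : ∀ μ : K, μ ^ n = 1 → p.IsRoot μ) : p = X ^ n - 1 := by
  have hmonic : (X ^ n - 1 : K[X]).Monic := by simpa using monic_X_pow_sub_C (1 : K) hn.ne'
  refine eq_of_monic_of_dvd_of_natDegree_le hmonic hp ?_ (by rwa [← C_1, natDegree_X_pow_sub_C])
  rw [X_pow_sub_one_eq_prod hn hζ]
  refine Finset.prod_dvd_of_coprime
    ((pairwise_coprime_X_sub_C Function.injective_id).set_pairwise _) fun μ hμ => ?_
  exact dvd_iff_isRoot.mpr (hroots μ ((mem_nthRootsFinset hn 1).mp hμ))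

theorem Matrix.isRoot_charpoly_inv_of_det_smul_sub_one_eq_zero {K ι : Type*} [Field K]
    [Fintype ι] [DecidableEq ι] (M : Matrix ι ι K) {x : K} (hx : (x • M - 1).det = 0) :
    M.charpoly.IsRoot x⁻¹ := by
  have hx0 : x ≠ 0 := by
    rintro rfl
    simp [det_neg] at hx
  have hfactor : x • M - 1 = (-x) • (scalar ι x⁻¹ - M) := by
    rw [scalar_apply, ← smul_one_eq_diagonal, smul_sub, smul_smul, neg_mul, mul_inv_cancel₀ hx0,
      neg_smul, one_smul, neg_smul, sub_neg_eq_add, neg_add_eq_sub]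
  rw [hfactor, det_smul, ← eval_charpoly] at hx
  simpa [hx0] using hx

theorem Matrix.charpoly_eq_X_pow_card_sub_one {K ι : Type*} [Field K] [Fintype ι]
    [DecidableEq ι] [Nonempty ι] {ζ : K} (hζ : IsPrimitiveRoot ζ (Fintype.card ι))
    {M : Matrix ι ι K} (hM : ∀ x : K, x ^ Fintype.card ι = 1 → (x • M - 1).det = 0) :
    M.charpoly = X ^ Fintype.card ι - 1 :=
  eq_X_pow_sub_one_of_isRoot Fintype.card_pos hζ M.charpoly_monic
    M.charpoly_natDegree_eq_dim.le fun μ hμ => by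
      simpa using M.isRoot_charpoly_inv_of_det_smul_sub_one_eq_zero
        (hM μ⁻¹ (by rw [inv_pow, hμ, inv_one]))

theorem Matrix.pow_eq_one_of_charpoly_eq_X_pow_sub_one {R ι : Type*} [CommRing R] [Fintype ι]
    [DecidableEq ι] {M : Matrix ι ι R} {n : ℕ} (hM : M.charpoly = X ^ n - 1) : M ^ n = 1 := by
  simpa [hM, sub_eq_zero] using M.aeval_self_charpoly

theorem mem_unitary_of_pow_eq_one {A : Type*} [TopologicalSpace A] [Ring A] [StarRing A]
    [Algebra ℂ A] [ContinuousFunctionalCalculus ℂ A IsStarNormal] {u : A} [IsStarNormal u]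
    {n : ℕ} (hn : n ≠ 0) (hu : u ^ n = 1) : u ∈ unitary A := by
  refine mem_unitary_of_spectrum_subset_unitary fun μ hμ => ?_
  rcases subsingleton_or_nontrivial A with hA | hA
  · simp [spectrum.of_subsingleton] at hμ
  have hμn : μ ^ n = 1 := by simpa [hu, spectrum.one_eq] using spectrum.pow_mem_pow u n hμ
  rw [SetLike.mem_coe, Unitary.mem_iff_star_mul_self, RCLike.star_def, Complex.conj_mul',
    Complex.norm_eq_one_of_pow_eq_one hμn hn]
  norm_num

theorem ContinuousLinearMap.mem_unitary_of_norm_le_one_of_pow_eq_one {𝕜 H : Type*} [RCLike 𝕜]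
    [NormedAddCommGroup H] [InnerProductSpace 𝕜 H] [CompleteSpace H] {u : H →L[𝕜] H}
    (hu : ‖u‖ ≤ 1) {n : ℕ} (hn : n ≠ 0) (hun : u ^ n = 1) : u ∈ unitary (H →L[𝕜] H) := by
  obtain ⟨m, rfl⟩ := Nat.exists_eq_succ_of_ne_zero hn
  have hcontr : ∀ k x, ‖(u ^ k) x‖ ≤ ‖x‖ := by
    intro k
    induction k with
    | zero => simp
    | succ k ih =>
      exact fun x =>
        (ih _).trans ((u.le_opNorm x).trans (mul_le_of_le_one_left (norm_nonneg x) hu))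
  have hleft : u ^ m * u = 1 := by rw [← pow_succ, hun]
  have hright : u * u ^ m = 1 := by rw [← pow_succ', hun]
  have hisometry : ∀ x, ‖u x‖ = ‖x‖ := fun x => le_antisymm (by simpa using hcontr 1 x) <|
    calc ‖x‖ = ‖(u ^ m * u) x‖ := by rw [hleft, one_apply_eq_self]
      _ ≤ ‖u x‖ := hcontr m (u x)
  exact (Units.mk u (u ^ m) hright hleft).isUnit.mem_unitary_of_star_mul_self
    ((norm_map_iff_adjoint_comp_self u).mp hisometry)

theorem Matrix.toEuclideanCLM_mem_unitary_iff {𝕜 ι : Type*} [RCLike 𝕜] [Fintype ι]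
    [DecidableEq ι] {M : Matrix ι ι 𝕜} :
    toEuclideanCLM (𝕜 := 𝕜) M ∈ unitary _ ↔ M ∈ unitary (Matrix ι ι 𝕜) :=
  ⟨fun h => by
    simpa using Unitary.map_mem (toEuclideanCLM (𝕜 := 𝕜) (n := ι)).symm.toStarAlgHom h,
    Unitary.map_mem (toEuclideanCLM (𝕜 := 𝕜) (n := ι)).toStarAlgHom⟩

theorem stmt_2 (n : ℕ) (hn : 2 ≤ n)
    (A B : Matrix (Fin n) (Fin n) ℂ)
    (hA : A * Aᴴ = Aᴴ * A)
    (hB : ‖Matrix.toEuclideanCLM (𝕜 := ℂ) B‖ = 1)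
    (hspec : {p : ℂ × ℂ × ℂ |
        (p.1 • A + p.2.1 • B + p.2.2 • (A * B) - 1).det = 0} =
      {p : ℂ × ℂ × ℂ |
        p.1 ^ n + p.2.1 ^ n + (-1 : ℂ) ^ (n - 1) * p.2.2 ^ n = 1}) :
    A * Aᴴ = 1 ∧ B * Bᴴ = 1 ∧
      A.charpoly = X ^ n - 1 ∧ B.charpoly = X ^ n - 1 := by
  have hn0 : n ≠ 0 := by omega
  have : Nonempty (Fin n) := ⟨⟨0, by omega⟩⟩
  obtain ⟨ζ, hζ⟩ : ∃ ζ : ℂ, IsPrimitiveRoot ζ (Fintype.card (Fin n)) :=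
    ⟨_, by simpa using isPrimitiveRoot_exp n hn0⟩
  have hA_det : ∀ x : ℂ, x ^ Fintype.card (Fin n) = 1 → (x • A - 1).det = 0 := by
    intro x hx
    simpa using hspec.ge (show (x, 0, 0) ∈ _ by simpa [zero_pow hn0] using hx)
  have hB_det : ∀ x : ℂ, x ^ Fintype.card (Fin n) = 1 → (x • B - 1).det = 0 := by
    intro x hx
    simpa using hspec.ge (show (0, x, 0) ∈ _ by simpa [zero_pow hn0] using hx)
  have hcA : A.charpoly = X ^ n - 1 := by simpa using charpoly_eq_X_pow_card_sub_one hζ hA_det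
  have hcB : B.charpoly = X ^ n - 1 := by simpa using charpoly_eq_X_pow_card_sub_one hζ hB_det
  have : IsStarNormal A := ⟨hA.symm⟩
  have hAu : toEuclideanCLM (𝕜 := ℂ) A ∈ unitary _ := mem_unitary_of_pow_eq_one hn0 <| by
    rw [← map_pow, pow_eq_one_of_charpoly_eq_X_pow_sub_one hcA, map_one]
  have hBu : toEuclideanCLM (𝕜 := ℂ) B ∈ unitary _ :=
    ContinuousLinearMap.mem_unitary_of_norm_le_one_of_pow_eq_one hB.le hn0 <| by
      rw [← map_pow, pow_eq_one_of_charpoly_eq_X_pow_sub_one hcB, map_one]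
  exact ⟨Unitary.mul_star_self_of_mem (toEuclideanCLM_mem_unitary_iff.mp hAu),
    Unitary.mul_star_self_of_mem (toEuclideanCLM_mem_unitary_iff.mp hBu), hcA, hcB⟩
end

section
/- Let n ≥ 2, ω = exp(2πi/n), let Aₙ ∈ Mₙ(ℂ) be the diagonal matrix with (Aₙ)_{jj} = ω^j for j = 0,…,n−1, let Fₙ be the Fourier matrix with entries (Fₙ)_{jk} = ω^{jk}, and let B̂ₙ be the cyclic shift matrix with (B̂ₙ)_{jk} = 1 if j ≡ k+1 (mod n) and 0 otherwise. Let P₁, P₂ ∈ Mₙ(ℂ) be permutation matrices and set B = (1/n)·P₂ᵀ Fₙᴴ P₁ᵀ Aₙ P₁ Fₙ P₂. Suppose P₁ is the permutation matrix of a permutation π of {0,…,n−1} for which there exist integers q, m with gcd(q,n) = 1 and π(j) ≡ qj + m (mod n) for all j. Then {(x,y,z) ∈ ℂ³ : det(x·Aₙ + y·B + z·AₙB − I) = 0} = {(x,y,z) ∈ ℂ³ : xⁿ + yⁿ + (−1)^{n−1} zⁿ = 1}, and there exist a permutation matrix P ∈ Mₙ(ℂ) and a unitary U ∈ Mₙ(ℂ)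 with U Aₙ Uᴴ = Pᵀ Aₙ P and U B Uᴴ = B̂ₙ. -/
open Matrix Complex

noncomputable section

/-- A permutation matrix: the matrix of a permutation `σ`, sending the standard
basis vector `e j` to `e (σ j)`. -/
def IsPermMatrix {n : ℕ} (P : Matrix (Fin n) (Fin n) ℂ) : Prop :=
  ∃ σ : Equiv.Perm (Fin n),
    P = Matrix.of fun i j : Fin n => if i = σ j then 1 else 0

section helpers
variable {n : ℕ}

def pmat (σ : Equiv.Perm (Fin n)) : Matrix (Fin n) (Fin n) ℂ :=
  Matrix.of fun i j => if i = σ j then 1 else 0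

lemma pmat_t_mul (σ : Equiv.Perm (Fin n)) : (pmat σ)ᵀ * pmat σ = 1 := by
  ext i j
  simp [pmat, Matrix.mul_apply, Matrix.one_apply, ite_mul, mul_ite,
    Finset.sum_ite_eq, Finset.sum_ite_eq', σ.injective.eq_iff, eq_comm]

lemma pmat_conj (σ : Equiv.Perm (Fin n)) (M : Matrix (Fin n) (Fin n) ℂ) :
    (pmat σ)ᵀ * M * pmat σ = Matrix.of fun i j => M (σ i) (σ j) := by
  ext i j
  simp [pmat, Matrix.mul_apply, ite_mul, mul_ite,
    Finset.sum_ite_eq, Finset.sum_ite_eq']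

lemma pmat_star (σ : Equiv.Perm (Fin n)) : (pmat σ)ᴴ = (pmat σ)ᵀ := by
  ext i j
  simp [pmat, Matrix.conjTranspose_apply, apply_ite (starRingEnd ℂ)]

def zf [NeZero n] (z : ZMod n) : Fin n := ⟨z.val, ZMod.val_lt z⟩

lemma fz_zf [NeZero n] (z : ZMod n) : (((zf z : Fin n) : ℕ) : ZMod n) = z :=
  ZMod.natCast_rightInverse z

lemma zf_fz [NeZero n] (j : Fin n) : zf (((j : ℕ) : ZMod n)) = j := by
  ext
  simp [zf, ZMod.val_natCast, Nat.mod_eq_of_lt j.isLt]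

def cyc [NeZero n] (σ : Equiv.Perm (Fin n)) (u : ZMod n) : Equiv.Perm (Fin n) where
  toFun k := σ.symm (zf (((σ k : ℕ) : ZMod n) + u))
  invFun k := σ.symm (zf (((σ k : ℕ) : ZMod n) - u))
  left_inv k := by simp [fz_zf, zf_fz]
  right_inv k := by simp [fz_zf, zf_fz]

lemma cyc_spec [NeZero n] (σ : Equiv.Perm (Fin n)) (u : ZMod n) (j k : Fin n) :
    j = cyc σ u k ↔ ((σ j : ℕ) : ZMod n) = ((σ k : ℕ) : ZMod n) + u := by
  constructor
  · rintro rfl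
    simp [cyc, fz_zf]
  · intro h
    apply σ.injective
    simp only [cyc, Equiv.coe_fn_mk, Equiv.apply_symm_apply]
    rw [← h, zf_fz]

lemma cyc_pow [NeZero n] (σ : Equiv.Perm (Fin n)) (u : ZMod n) (t : ℕ) (k : Fin n) :
    ((cyc σ u) ^ t) k = σ.symm (zf (((σ k : ℕ) : ZMod n) + t * u)) := by
  induction t generalizing k with
  | zero => simp [zf_fz]
  | succ t ih =>
    rw [pow_succ', Equiv.Perm.mul_apply, ih]
    simp only [cyc, Equiv.coe_fn_mk, Equiv.apply_symm_apply, fz_zf]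
    congr 2
    push_cast
    ring

lemma cyc_reach [NeZero n] (σ : Equiv.Perm (Fin n)) (u v : ZMod n) (hv : v * u = 1)
    (j k : Fin n) : ∃ t : ℕ, ((cyc σ u) ^ t) j = k := by
  refine ⟨((((σ k : ℕ) : ZMod n) - ((σ j : ℕ) : ZMod n)) * v).val, ?_⟩
  rw [cyc_pow]
  have : (((((((σ k : ℕ) : ZMod n) - ((σ j : ℕ) : ZMod n)) * v).val : ℕ)) : ZMod n)
      = (((σ k : ℕ) : ZMod n) - ((σ j : ℕ) : ZMod n)) * v := ZMod.natCast_rightInverse _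
  rw [this, mul_assoc, hv, mul_one, add_sub_cancel, zf_fz, Equiv.symm_apply_apply]

def mulPerm [NeZero n] (σ : Equiv.Perm (Fin n)) (u v : ZMod n) (huv : u * v = 1)
    (hvu : v * u = 1) : Equiv.Perm (Fin n) where
  toFun k := σ.symm (zf (u * ((k : ℕ) : ZMod n)))
  invFun k := zf (v * ((σ k : ℕ) : ZMod n))
  left_inv k := by
    simp only [Equiv.apply_symm_apply, fz_zf, ← mul_assoc, hvu, one_mul, zf_fz]
  right_inv k := by
    simp only [fz_zf, ← mul_assoc, huv, one_mul, zf_fz, Equiv.symm_apply_apply]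

lemma prod_lem (hn : n ≠ 0) {ω : ℂ} (hprim : IsPrimitiveRoot ω n) (a b : ℂ) :
    ∏ i : Fin n, (a - ω ^ (i : ℕ) * b) = a ^ n - b ^ n := by
  have h := X_pow_sub_C_eq_prod hprim (Nat.pos_of_ne_zero hn) (rfl : b ^ n = b ^ n)
  have h2 := congrArg (Polynomial.eval a) h
  simp only [Polynomial.eval_sub, Polynomial.eval_pow, Polynomial.eval_X, Polynomial.eval_C,
    Polynomial.eval_prod, Polynomial.eval_mul] at h2
  rw [h2, ← Fin.prod_univ_eq_prod_range (fun i => (a - ω ^ i * b))]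

lemma gsum (hn : n ≠ 0) {ω : ℂ} (hprim : IsPrimitiveRoot ω n) (t : ℤ) :
    ∑ a : Fin n, (ω ^ t) ^ (a : ℕ) = if (n : ℤ) ∣ t then (n : ℂ) else 0 := by
  rw [Fin.sum_univ_eq_sum_range]
  by_cases h : ω ^ t = 1
  · rw [if_pos ((hprim.zpow_eq_one_iff_dvd t).mp h), h]
    simp
  · rw [if_neg (fun hd => h ((hprim.zpow_eq_one_iff_dvd t).mpr hd)), geom_sum_eq h]
    have : (ω ^ t) ^ n = 1 := by
      rw [← zpow_natCast (ω ^ t) n, ← _root_.zpow_mul, mul_comm, _root_.zpow_mul, zpow_natCast,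
        hprim.pow_eq_one, _root_.one_zpow]
    rw [this, sub_self, zero_div]

end helpers

theorem stmt_8 (n : ℕ) (hn : 2 ≤ n)
    (ω : ℂ) (hω : ω = Complex.exp (2 * Real.pi * Complex.I / n))
    (A F Bhat : Matrix (Fin n) (Fin n) ℂ)
    (hA : A = Matrix.diagonal (fun j : Fin n => ω ^ (j : ℕ)))
    (hF : F = Matrix.of (fun j k : Fin n => ω ^ ((j : ℕ) * (k : ℕ))))
    (hBhat : Bhat = Matrix.of fun j k : Fin n =>
      if (j : ℕ) % n = ((k : ℕ) + 1) % n then 1 else 0)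
    (P₁ P₂ : Matrix (Fin n) (Fin n) ℂ)
    (hP₂ : IsPermMatrix P₂)
    (π : Equiv.Perm (Fin n))
    (hP₁ : P₁ = Matrix.of fun i j : Fin n => if i = π j then 1 else 0)
    (hπ : ∃ q m : ℤ, Int.gcd q n = 1 ∧
      ∀ j : Fin n, ((π j : ℕ) : ℤ) ≡ q * ((j : ℕ) : ℤ) + m [ZMOD (n : ℤ)])
    (B : Matrix (Fin n) (Fin n) ℂ)
    (hB : B = ((1 : ℂ) / n) • (P₂ᵀ * Fᴴ * P₁ᵀ * A * P₁ * F * P₂)) :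
    ({p : ℂ × ℂ × ℂ |
        (p.1 • A + p.2.1 • B + p.2.2 • (A * B) - 1).det = 0} =
      {p : ℂ × ℂ × ℂ |
        p.1 ^ n + p.2.1 ^ n + (-1 : ℂ) ^ (n - 1) * p.2.2 ^ n = 1}) ∧
    ∃ P U : Matrix (Fin n) (Fin n) ℂ, IsPermMatrix P ∧ U * Uᴴ = 1 ∧
      U * A * Uᴴ = Pᵀ * A * P ∧ U * B * Uᴴ = Bhat := by
  haveI : NeZero n := ⟨by omega⟩
  haveI : Fact (1 < n) := ⟨by omega⟩
  obtain ⟨q, m, hq, hqm⟩ := hπ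
  obtain ⟨σ, hσ⟩ := hP₂
  have hn0 : n ≠ 0 := by omega
  have hnz : (n : ℂ) ≠ 0 := Nat.cast_ne_zero.mpr hn0
  have hprim : IsPrimitiveRoot ω n := hω ▸ Complex.isPrimitiveRoot_exp n hn0
  have hω0 : ω ≠ 0 := hprim.ne_zero hn0
  have hmod : ∀ a b : ℤ, a ≡ b [ZMOD (n : ℤ)] → ω ^ a = ω ^ b := by
    intro a b h
    obtain ⟨k, hk⟩ := h.dvd
    have hb : b = a + n * k := by linarith
    rw [hb, zpow_add₀ hω0, _root_.zpow_mul, zpow_natCast, hprim.pow_eq_one, _root_.one_zpow,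
      mul_one]
  have hnorm : ‖ω‖ = 1 := by
    have h1 : ‖ω‖ ^ n = 1 := by rw [← norm_pow, hprim.pow_eq_one, norm_one]
    have h2 : (0:ℝ) ≤ ‖ω‖ := norm_nonneg ω
    rcases lt_trichotomy ‖ω‖ 1 with h | h | h
    · have := pow_lt_one₀ h2 h hn0; linarith
    · exact h
    · have := one_lt_pow₀ h hn0; linarith
  have hstar : ∀ t : ℤ, (starRingEnd ℂ) (ω ^ t) = ω ^ (-t) := by
    intro t
    rw [map_zpow₀ (starRingEnd ℂ) ω t, ← Complex.inv_eq_conj hnorm, _root_.inv_zpow, ← _root_.zpow_neg]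
  obtain ⟨a, b, hab⟩ := Int.isCoprime_iff_gcd_eq_one.mpr hq
  have hinv : ((a : ℤ) : ZMod n) * ((q : ℤ) : ZMod n) = 1 := by
    have h1 : (((a * q + b * n : ℤ)) : ZMod n) = 1 := by rw [hab]; simp
    push_cast at h1
    rwa [ZMod.natCast_self, mul_zero, add_zero] at h1
  have hq0 : ((q : ℤ) : ZMod n) ≠ 0 := by
    intro h
    rw [h, mul_zero] at hinv
    exact zero_ne_one hinv
  -- the explicit form of B
  have hBe : B = Matrix.of (fun j k : Fin n =>
      if ((σ j : ℕ) : ZMod n) = ((σ k : ℕ) : ZMod n) + ((q : ℤ) : ZMod n)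
      then ω ^ (m : ℤ) else 0) := by
    have h1 : P₁ᵀ * A * P₁ = Matrix.diagonal (fun j => ω ^ ((π j : ℕ))) := by
      rw [hP₁, hA, show (Matrix.of fun i j : Fin n => if i = π j then (1:ℂ) else 0) = pmat π
        from rfl, pmat_conj]
      ext i j
      by_cases h : i = j
      · subst h; simp [Matrix.diagonal_apply_eq]
      · rw [Matrix.of_apply, Matrix.diagonal_apply_ne _ (fun hc => h (π.injective hc)),
          Matrix.diagonal_apply_ne _ h]
    have h2 : Fᴴ * (P₁ᵀ * A * P₁) * F = Matrix.of (fun j k : Fin n =>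
        if ((j : ℕ) : ZMod n) = ((k : ℕ) : ZMod n) + ((q : ℤ) : ZMod n)
        then (n : ℂ) * ω ^ (m : ℤ) else 0) := by
      rw [h1, hF]
      ext j k
      have hterm : ∀ i : Fin n,
          (starRingEnd ℂ) (ω ^ ((i : ℕ) * (j : ℕ))) * ω ^ ((π i : ℕ)) * ω ^ ((i : ℕ) * (k : ℕ))
          = (ω ^ ((q : ℤ) + (k : ℕ) - (j : ℕ))) ^ (i : ℕ) * ω ^ (m : ℤ) := by
        intro i
        rw [← zpow_natCast ω ((i : ℕ) * (j : ℕ)), hstar, ← zpow_natCast ω ((π i : ℕ)),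
          ← zpow_natCast ω ((i : ℕ) * (k : ℕ)), hmod _ _ (hqm i),
          ← zpow_natCast (ω ^ ((q : ℤ) + (k : ℕ) - (j : ℕ))) (i : ℕ), ← _root_.zpow_mul,
          ← zpow_add₀ hω0, ← zpow_add₀ hω0, ← zpow_add₀ hω0]
        congr 1
        push_cast
        ring
      rw [Matrix.mul_apply]
      simp only [Matrix.mul_diagonal, Matrix.conjTranspose_apply, Matrix.of_apply,
        Complex.star_def]
      rw [Finset.sum_congr rfl (fun i _ => hterm i), ← Finset.sum_mul, gsum hn0 hprim]
      have hiff : ((n : ℤ) ∣ ((q : ℤ) + (k : ℕ) - (j : ℕ)))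
          ↔ (((j : ℕ) : ZMod n) = ((k : ℕ) : ZMod n) + ((q : ℤ) : ZMod n)) := by
        rw [show ((q : ℤ) + (k : ℕ) - (j : ℕ)) = (((k : ℕ) : ℤ) + q) - ((j : ℕ) : ℤ) by ring,
          ← Int.modEq_iff_dvd, ← ZMod.intCast_eq_intCast_iff]
        push_cast
        exact Iff.rfl
      rw [ite_mul, zero_mul]
      simp only [hiff]
    rw [hB, hσ, show (Matrix.of fun i j : Fin n => if i = σ j then (1:ℂ) else 0) = pmat σ
      from rfl]
    have hassoc : (pmat σ)ᵀ * Fᴴ * P₁ᵀ * A * P₁ * F * pmat σ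
        = (pmat σ)ᵀ * (Fᴴ * (P₁ᵀ * A * P₁) * F) * pmat σ := by
      simp only [Matrix.mul_assoc]
    rw [hassoc, h2, pmat_conj]
    ext j k
    simp only [Matrix.smul_apply, Matrix.of_apply, smul_eq_mul]
    split_ifs with h
    · rw [← mul_assoc, one_div_mul_cancel hnz, one_mul]
    · exact mul_zero _
  set cAdd : Equiv.Perm (Fin n) := cyc σ ((q : ℤ) : ZMod n) with hcAdd
  have hfix : ∀ k, cAdd k ≠ k := by
    intro k h
    have h2 : ((σ k : ℕ) : ZMod n) = ((σ k : ℕ) : ZMod n) + ((q : ℤ) : ZMod n) :=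
      (cyc_spec σ _ k k).mp h.symm
    exact hq0 (left_eq_add.mp h2)
  have k0 : Fin n := ⟨0, by omega⟩
  have h1c : (1 : Equiv.Perm (Fin n)) ≠ cAdd := by
    intro h
    exact hfix k0 (by rw [← h]; rfl)
  have hcycle : cAdd.IsCycle := by
    refine ⟨k0, hfix k0, fun y _ => ?_⟩
    obtain ⟨t, ht⟩ := cyc_reach σ ((q : ℤ) : ZMod n) ((a : ℤ) : ZMod n) hinv k0 y
    exact ⟨(t : ℤ), by rw [zpow_natCast]; exact ht⟩
  have hsupp : cAdd.support = Finset.univ := by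
    ext k
    simp [Equiv.Perm.mem_support, hfix k]
  have hsign : ((Equiv.Perm.sign cAdd : ℤ) : ℂ) = -(-1) ^ n := by
    rw [hcycle.sign, hsupp, Finset.card_univ, Fintype.card_fin]
    push_cast
    ring
  constructor
  · ext ⟨x, y, z⟩
    simp only [Set.mem_setOf_eq]
    set M : Matrix (Fin n) (Fin n) ℂ := x • A + y • B + z • (A * B) - 1 with hM
    have hABe : ∀ j k, (A * B) j k = ω ^ (j : ℕ) * B j k := by
      intro j k
      rw [hA]
      exact Matrix.diagonal_mul _ _ _ _
    have hMe : ∀ j k, M j k = (if j = k then x * ω ^ (j : ℕ) - 1 else 0)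
        + (if j = cAdd k then (y + z * ω ^ (j : ℕ)) * ω ^ (m : ℤ) else 0) := by
      intro j k
      rw [hM]
      simp only [Matrix.sub_apply, Matrix.add_apply, Matrix.smul_apply, smul_eq_mul, hABe]
      rw [hBe, hA]
      simp only [Matrix.of_apply, Matrix.diagonal_apply, Matrix.one_apply]
      have hcnd : (((σ j : ℕ) : ZMod n) = ((σ k : ℕ) : ZMod n) + ((q : ℤ) : ZMod n))
          ↔ j = cAdd k := by
        rw [hcAdd]
        exact (cyc_spec σ ((q : ℤ) : ZMod n) j k).symm
      simp only [hcnd]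
      split_ifs with h1 h2 h3
      · exact absurd (h2.symm.trans h1) (hfix k)
      · ring
      · ring
      · ring
    have hkey : ∀ τ : Equiv.Perm (Fin n), τ ≠ 1 → τ ≠ cAdd → (∏ i, M (τ i) i) = 0 := by
      intro τ ht1 ht2
      by_contra hne
      have hne' : ∀ i ∈ Finset.univ, M (τ i) i ≠ 0 := Finset.prod_ne_zero_iff.mp hne
      have hch : ∀ i, τ i = i ∨ τ i = cAdd i := by
        intro i
        by_contra hc
        push_neg at hc
        exact hne' i (Finset.mem_univ i) (by rw [hMe, if_neg hc.1, if_neg hc.2, add_zero])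
      by_cases hex : ∃ i, τ i = cAdd i
      · obtain ⟨i₀, hi₀⟩ := hex
        have hall : ∀ t : ℕ, τ ((cAdd ^ t) i₀) = cAdd ((cAdd ^ t) i₀) := by
          intro t
          induction t with
          | zero => simpa using hi₀
          | succ t ih =>
            rw [pow_succ', Equiv.Perm.mul_apply]
            rcases hch (cAdd ((cAdd ^ t) i₀)) with h | h
            · exact absurd (τ.injective (h.trans ih.symm)) (hfix ((cAdd ^ t) i₀))
            · exact h
        refine ht2 (Equiv.ext fun k => ?_)
        obtain ⟨t, ht⟩ := cyc_reach σ ((q : ℤ) : ZMod n) ((a : ℤ) : ZMod n) hinv i₀ k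
        rw [← hcAdd] at ht
        rw [← ht]
        exact hall t
      · push_neg at hex
        refine ht1 (Equiv.ext fun k => ?_)
        rcases hch k with h | h
        · simpa using h
        · exact absurd h (hex k)
    have hdet : M.det = ∏ i, M i i + ((Equiv.Perm.sign cAdd : ℤ) : ℂ) * ∏ i, M (cAdd i) i := by
      rw [Matrix.det_apply']
      rw [← Finset.sum_subset (Finset.subset_univ ({1, cAdd} : Finset (Equiv.Perm (Fin n))))
        (fun τ _ hτ => by
          simp only [Finset.mem_insert, Finset.mem_singleton] at hτ
          push_neg at hτ
          rw [hkey τ hτ.1 hτ.2, mul_zero])]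
      rw [Finset.sum_pair h1c]
      simp [Equiv.Perm.one_apply]
    have hPid : ∏ i, M i i = (-1 : ℂ) ^ n * (1 - x ^ n) := by
      have he : ∀ i, M i i = (-1) * (1 - ω ^ (i : ℕ) * x) := by
        intro i
        rw [hMe, if_pos rfl, if_neg (fun h => hfix i h.symm)]
        ring
      rw [Finset.prod_congr rfl (fun i _ => he i), Finset.prod_mul_distrib, Finset.prod_const,
        prod_lem hn0 hprim 1 x, Finset.card_univ, Fintype.card_fin, one_pow]
    have hPc : ∏ i, M (cAdd i) i = y ^ n - (-1 : ℂ) ^ n * z ^ n := by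
      have he : ∀ i, M (cAdd i) i = (y - ω ^ ((cAdd i : ℕ)) * (-z)) * ω ^ (m : ℤ) := by
        intro i
        rw [hMe, if_neg (hfix i), if_pos rfl]
        ring
      rw [Finset.prod_congr rfl (fun i _ => he i), Finset.prod_mul_distrib, Finset.prod_const,
        Finset.card_univ, Fintype.card_fin]
      have h3 : ∏ i, (y - ω ^ ((cAdd i : ℕ)) * (-z)) = y ^ n - (-z) ^ n := by
        rw [Equiv.prod_comp cAdd (fun i : Fin n => y - ω ^ ((i : ℕ)) * (-z))]
        exact prod_lem hn0 hprim y (-z)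
      have h4 : (ω ^ (m : ℤ)) ^ n = 1 := by
        rw [← zpow_natCast (ω ^ (m : ℤ)) n, ← _root_.zpow_mul, mul_comm, _root_.zpow_mul,
          zpow_natCast, hprim.pow_eq_one, _root_.one_zpow]
      rw [h3, h4, mul_one, neg_pow]
    rw [hdet, hsign, hPid, hPc]
    have hsq : ((-1 : ℂ) ^ (n - 1)) * ((-1 : ℂ) ^ (n - 1)) = 1 := by
      rw [← pow_add, show (n - 1) + (n - 1) = 2 * (n - 1) by ring, pow_mul]
      norm_num
    have hps : (-1 : ℂ) ^ n = -(-1 : ℂ) ^ (n - 1) := by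
      conv_lhs => rw [show n = (n - 1) + 1 by omega]
      rw [pow_succ]
      ring
    rw [hps]
    constructor
    · intro h
      linear_combination ((-1 : ℂ) ^ (n - 1)) * h
        - (x ^ n + y ^ n + (-1 : ℂ) ^ (n - 1) * z ^ n - 1) * hsq
    · intro h
      linear_combination ((-1 : ℂ) ^ (n - 1)) * h
  · set ρ : Equiv.Perm (Fin n) :=
      mulPerm σ ((q : ℤ) : ZMod n) ((a : ℤ) : ZMod n) (by rw [mul_comm]; exact hinv) hinv with hρ
    set d : Fin n → ℂ := fun k => ω ^ (-(m * (k : ℕ)) : ℤ) with hd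
    have hdstar : ∀ k, star (d k) = ω ^ ((m * (k : ℕ) : ℤ)) := by
      intro k
      rw [hd]
      simp only
      rw [show (star (ω ^ (-(m * (k : ℕ)) : ℤ)) : ℂ)
        = (starRingEnd ℂ) (ω ^ (-(m * (k : ℕ)) : ℤ)) from rfl, hstar, neg_neg]
    have hdd : ∀ k, d k * star (d k) = 1 := by
      intro k
      rw [hdstar, hd]
      simp only
      rw [← zpow_add₀ hω0]
      simp
    have hPtH : ((pmat ρ)ᵀ)ᴴ = pmat ρ := by
      rw [← pmat_star]
      exact Matrix.conjTranspose_conjTranspose _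
    have hconjN : ∀ Nm : Matrix (Fin n) (Fin n) ℂ,
        Matrix.diagonal d * (pmat ρ)ᵀ * Nm * (Matrix.diagonal d * (pmat ρ)ᵀ)ᴴ
        = Matrix.of (fun j k => d j * Nm (ρ j) (ρ k) * star (d k)) := by
      intro Nm
      rw [Matrix.conjTranspose_mul, hPtH, Matrix.diagonal_conjTranspose]
      rw [show Matrix.diagonal d * (pmat ρ)ᵀ * Nm * (pmat ρ * Matrix.diagonal (star d))
          = Matrix.diagonal d * ((pmat ρ)ᵀ * Nm * pmat ρ) * Matrix.diagonal (star d) by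
        simp only [Matrix.mul_assoc], pmat_conj]
      ext j k
      simp [Matrix.diagonal_mul, Matrix.mul_diagonal]
    have hσρ : ∀ j : Fin n,
        ((σ (ρ j) : ℕ) : ZMod n) = ((q : ℤ) : ZMod n) * ((j : ℕ) : ZMod n) := by
      intro j
      simp only [hρ, mulPerm, Equiv.coe_fn_mk, Equiv.apply_symm_apply, fz_zf]
    refine ⟨pmat ρ, Matrix.diagonal d * (pmat ρ)ᵀ, ⟨ρ, rfl⟩, ?_, ?_, ?_⟩
    · rw [Matrix.conjTranspose_mul, hPtH, Matrix.diagonal_conjTranspose]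
      rw [show Matrix.diagonal d * (pmat ρ)ᵀ * (pmat ρ * Matrix.diagonal (star d))
          = Matrix.diagonal d * ((pmat ρ)ᵀ * pmat ρ) * Matrix.diagonal (star d) by
        simp only [Matrix.mul_assoc], pmat_t_mul, Matrix.mul_one,
        Matrix.diagonal_mul_diagonal]
      rw [show (fun i => d i * star d i) = fun _ : Fin n => (1 : ℂ) from funext fun k => hdd k]
      exact Matrix.diagonal_one
    · rw [hconjN A, pmat_conj, hA]
      ext j k
      by_cases h : j = k
      · subst h
        simp only [Matrix.of_apply, Matrix.diagonal_apply_eq]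
        linear_combination (ω ^ ((ρ j : ℕ))) * hdd j
      · simp only [Matrix.of_apply,
          Matrix.diagonal_apply_ne _ (fun hc => h (ρ.injective hc))]
        simp
    · rw [hconjN B, hBe, hBhat]
      ext j k
      simp only [Matrix.of_apply]
      by_cases hc : ((j : ℕ) : ZMod n) = ((k : ℕ) : ZMod n) + 1
      · have hL : ((σ (ρ j) : ℕ) : ZMod n) = ((σ (ρ k) : ℕ) : ZMod n) + ((q : ℤ) : ZMod n) := by
          rw [hσρ, hσρ, hc]
          ring
        have hR : (j : ℕ) % n = ((k : ℕ) + 1) % n :=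
          (ZMod.natCast_eq_natCast_iff ((j : ℕ)) ((k : ℕ) + 1) n).mp (by push_cast; exact hc)
        rw [if_pos hL, if_pos hR, hdstar]
        rw [hd]
        simp only
        rw [← zpow_add₀ hω0, ← zpow_add₀ hω0]
        have hdvd : (n : ℤ) ∣ (((k : ℕ) : ℤ) + 1 - ((j : ℕ) : ℤ)) := by
          rw [← Int.modEq_iff_dvd, ← ZMod.intCast_eq_intCast_iff]
          push_cast
          exact hc
        obtain ⟨c, hcc⟩ := hdvd
        rw [show (-(m * ((j : ℕ) : ℤ)) + (m : ℤ) + m * ((k : ℕ) : ℤ)) = (n : ℤ) * (m * c) by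
          linear_combination m * hcc, _root_.zpow_mul, zpow_natCast, hprim.pow_eq_one,
          _root_.one_zpow]
      · have e1 : ∀ w : ZMod n, ((a : ℤ) : ZMod n) * (((q : ℤ) : ZMod n) * w) = w := by
          intro w
          rw [← mul_assoc, hinv, one_mul]
        rw [if_neg ?_, if_neg ?_]
        · simp
        · intro hcon
          apply hc
          have h2 := (ZMod.natCast_eq_natCast_iff ((j : ℕ)) ((k : ℕ) + 1) n).mpr hcon
          push_cast at h2
          exact h2
        · intro hcon
          apply hc
          rw [hσρ, hσρ] at hcon
          have h2 := congrArg (fun t => ((a : ℤ) : ZMod n) * t) hcon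
          rw [e1, mul_add, e1, hinv] at h2
          exact h2
end
end

section
/- Let n ≥ 2 and let A, B ∈ Mₙ(ℂ) be such that A is normal, the operator norm of B on Euclidean ℂⁿ equals 1, and {(x,y,z) ∈ ℂ³ : det(x·A + y·B + z·AB − I) = 0} = {(x,y,z) ∈ ℂ³ : xⁿ + yⁿ + (−1)^{n−1} zⁿ = 1}. Let P₀ be the orthogonal projection onto ker(A − I) and let T be the reduced resolvent of A at the eigenvalue 1. Then: P₀(BT)ᵏBP₀ = 0 for k = 0,…,n−2; P₀(BT)^{n−1}BP₀ = ((−1)^{n−1}/n)·P₀; P₀(ABT)ᵏABP₀ = 0 for k = 0,…,n−2; and P₀(ABT)^{n−1}ABP₀ = (1/n)·P₀. -/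
/-!
Write `c = γ / n`. The identity `det (w - A - t B) = wⁿ - (1 + γ tⁿ)` says that the eigenvalue of
`A + t B` near `1` is `(1 + γ tⁿ)^(1/n) = 1 + c tⁿ + O(t²ⁿ)`, so `det (1 + c tⁿ - A - t B) = O(t²ⁿ)`.
Hence the Taylor coefficients `V k` of the adjugate of `1 + c tⁿ - A - t B` satisfy
`(1 - A) V (k + 1) = B V k` for `k < n - 1` and `(1 - A) V n - B V (n - 1) + c V 0 = 0`.
Inverting `1 - A` off `P₀` by the reduced resolvent gives `V (k + 1) ≡ -T B V k` modulo `P₀`, so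
`P₀ B V k = (-1)ᵏ P₀ (B T)ᵏ B V 0`, which vanishes for `k < n - 1` and equals `c P₀ V 0` for
`k = n - 1`. Finally `V 0 = adj (1 - A)` acts on the range of `P₀` as multiplication by `n`, the
derivative at `0` of `det (1 + τ - A) = (1 + τ)ⁿ - 1`. The spectral hypothesis restricted to the
planes `z = 0` and `y = 0` gives this determinant identity for `B` with `γ = 1` and for `A B` with
`γ = (-1)ⁿ⁻¹`.
-/

open Matrix Polynomial

section ReducedResolvent

variable {K R : Type*} [Field K] [Ring R] [Algebra K R] {M P T B : R} {V : ℕ → R} {N : ℕ}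

theorem proj_mul_eq_zero_of_mul_proj_eq_zero (hP : P * P = P) (hMP : M * P = 0)
    (hTM : T * M = 1 - P) (hMT : M * T = 1 - P) : P * M = 0 :=
  calc P * M = P * M * (T * M) + P * M * P := by rw [hTM, mul_sub, mul_one, sub_add_cancel]
    _ = (P - P * P) * M := by
      rw [← mul_assoc, mul_assoc P M T, hMT, mul_assoc P M P, hMP]
      noncomm_ring
    _ = 0 := by rw [hP, sub_self, zero_mul]

theorem eq_proj_mul_sub_of_mul_eq (hTM : T * M = P - 1) {k : ℕ} (hV : M * V (k + 1) = B * V k) :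
    V (k + 1) = P * V (k + 1) - T * (B * V k) := by
  have h := congrArg (T * ·) hV
  simp only [← mul_assoc, hTM, sub_mul, one_mul] at h
  rw [← mul_assoc, ← h]; abel

theorem proj_mul_pow_mul_eq_neg_one_pow_smul (hTM : T * M = P - 1)
    (hV : ∀ k < N, M * V (k + 1) = B * V k) :
    ∀ m j, j + m ≤ N → (∀ i < j + m, P * (B * T) ^ i * B * P = 0) →
      P * (B * T) ^ j * B * V m = (-1 : K) ^ m • (P * (B * T) ^ (j + m) * B * V 0) := by
  intro m
  induction m with
  | zero => simp
  | succ m ih =>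
    intro j hjm hvanish
    have hP : P * (B * T) ^ j * B * P = 0 := hvanish j (by omega)
    have hstep := ih (j + 1) (by omega) fun i hi ↦ hvanish i (by omega)
    calc P * (B * T) ^ j * B * V (m + 1)
        = P * (B * T) ^ j * B * P * V (m + 1) - P * (B * T) ^ (j + 1) * B * V m := by
          conv_lhs => rw [eq_proj_mul_sub_of_mul_eq hTM (hV m (by omega))]
          simp only [pow_succ, mul_sub, mul_assoc]
      _ = (-1 : K) ^ (m + 1) • (P * (B * T) ^ (j + (m + 1)) * B * V 0) := by
          rw [hP, zero_mul, zero_sub, hstep, pow_succ, mul_neg_one, neg_smul,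
            show j + 1 + m = j + (m + 1) by omega]

theorem proj_mul_pow_mul_proj_eq (hP : P * P = P) (hPM : P * M = 0) (hTM : T * M = P - 1)
    (hV : ∀ k < N, M * V (k + 1) = B * V k) {c u : K} (hlast : P * B * V N = c • (P * V 0))
    (hV0 : V 0 * P = u • P) (hu : u ≠ 0) :
    (∀ k < N, P * (B * T) ^ k * B * P = 0) ∧
      P * (B * T) ^ N * B * P = ((-1) ^ N * c) • P := by
  have hchain : ∀ k ≤ N, (∀ i < k, P * (B * T) ^ i * B * P = 0) →
      u • (P * (B * T) ^ k * B * P) = (-1 : K) ^ k • (P * B * V k * P) := by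
    intro k hk hvanish
    have h := proj_mul_pow_mul_eq_neg_one_pow_smul (K := K) hTM hV k 0 (by omega)
      (by simpa using hvanish)
    simp only [pow_zero, mul_one, zero_add] at h
    rw [h, smul_mul_assoc, smul_smul, ← pow_add, ← two_mul, pow_mul, neg_one_sq, one_pow,
      one_smul, mul_assoc _ (V 0), hV0, mul_smul_comm]
  have hvanish : ∀ k < N, P * (B * T) ^ k * B * P = 0 := by
    intro k
    induction k using Nat.strong_induction_on with
    | _ k ih =>
      intro hk
      have hPBV : P * B * V k = 0 := by
        rw [mul_assoc, ← hV k hk, ← mul_assoc, hPM, zero_mul]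
      have h := hchain k hk.le fun i hi ↦ ih i hi (hi.trans hk)
      rw [hPBV, zero_mul, smul_zero] at h
      exact (smul_eq_zero.mp h).resolve_left hu
  refine ⟨hvanish, smul_right_injective R hu ?_⟩
  dsimp only
  rw [hchain N le_rfl hvanish, hlast, smul_mul_assoc, mul_assoc, hV0, mul_smul_comm, hP,
    smul_smul, smul_smul, smul_smul, mul_comm u]

end ReducedResolvent

namespace Matrix

variable {ι R : Type*} [Fintype ι] [DecidableEq ι] [CommRing R]

theorem coeff_matPolyEquiv_mul_adjugate (M : Matrix ι ι R[X]) (k : ℕ) :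
    (matPolyEquiv M * matPolyEquiv M.adjugate).coeff k = M.det.coeff k • 1 := by
  rw [← map_mul, mul_adjugate, matPolyEquiv_smul_one, coeff_map, Algebra.algebraMap_eq_smul_one]

theorem coeff_matPolyEquiv_adjugate_mul (M : Matrix ι ι R[X]) (k : ℕ) :
    (matPolyEquiv M.adjugate * matPolyEquiv M).coeff k = M.det.coeff k • 1 := by
  rw [← map_mul, adjugate_mul, matPolyEquiv_smul_one, coeff_map, Algebra.algebraMap_eq_smul_one]

theorem coeff_zero_matPolyEquiv_adjugate (M : Matrix ι ι R[X]) :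
    (matPolyEquiv M.adjugate).coeff 0 = ((matPolyEquiv M).coeff 0).adjugate := by
  simp only [coeff_zero_eq_eval_zero, ← (scalar ι).map_zero, matPolyEquiv_eval_eq_map]
  exact (evalRingHom 0).map_adjugate M

theorem adjugate_mul_eq_smul_of_mul_eq_zero {M P : Matrix ι ι R} (h : M * P = 0) :
    M.adjugate * P = (-M).charpoly.coeff 1 • P := by
  have hcoeff := coeff_matPolyEquiv_adjugate_mul (charmatrix (-M)) 1
  rw [matPolyEquiv_charmatrix, map_neg, sub_neg_eq_add, mul_add, coeff_add, coeff_mul_X,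
    coeff_mul_C, coeff_zero_matPolyEquiv_adjugate, matPolyEquiv_charmatrix] at hcoeff
  have hM : (X - C (-M)).coeff 0 = M := by simp
  rw [hM, ← charpoly] at hcoeff
  simpa [add_mul, mul_assoc, h] using congrArg (· * P) hcoeff

end Matrix

section Perturbation

variable {K : Type*} [Field K] [CharZero K] {n : ℕ} {A B P T : Matrix (Fin n) (Fin n) K}

theorem adjugate_one_sub_mul_eq_smul (hdet : ∀ w : K, (w • 1 - A).det = w ^ n - 1)
    (hAP : (A - 1) * P = 0) : (1 - A).adjugate * P = (n : K) • P := by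
  have hcharpoly : (A - 1).charpoly = (X + 1) ^ n - 1 := Polynomial.funext fun τ ↦ by
    rw [eval_charpoly, eval_sub, eval_pow, eval_add, eval_X, eval_one, ← hdet (τ + 1)]
    congr 1
    rw [add_smul, one_smul, scalar_apply, ← smul_one_eq_diagonal]
    abel
  rw [adjugate_mul_eq_smul_of_mul_eq_zero (by rw [← neg_sub, neg_mul, hAP, neg_zero]), neg_sub,
    hcharpoly, coeff_sub, coeff_X_add_one_pow, coeff_one]
  simp

theorem exists_adjugate_coeffs_of_det_eq (hn : n ≠ 0) {γ : K}
    (hdet : ∀ w t : K, (w • 1 - A - t • B).det = w ^ n - (1 + γ * t ^ n)) :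
    ∃ V : ℕ → Matrix (Fin n) (Fin n) K, V 0 = (1 - A).adjugate ∧
      (∀ k < n - 1, (1 - A) * V (k + 1) = B * V k) ∧
      (1 - A) * V n - B * V (n - 1) + (γ / n) • V 0 = 0 := by
  set c := γ / n
  -- `X ^ 1` rather than `X`, so that `coeff_X_pow_mul'` computes both shifted coefficients
  set L : (Matrix (Fin n) (Fin n) K)[X] := C (1 - A) - C B * X ^ 1 + C (c • 1) * X ^ n
  set W := matPolyEquiv (matPolyEquiv.symm L).adjugate
  have hLeval (t : K) : L.eval (scalar _ t) = (1 + c * t ^ n) • 1 - A - t • B := by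
    simp only [L, eval_add, eval_sub, eval_mul_X_pow, eval_C, scalar_apply,
      ← smul_one_eq_diagonal]
    simp only [pow_one, _root_.smul_pow, one_pow, mul_smul_comm, mul_one]
    module
  have hdetL : (matPolyEquiv.symm L).det = (1 + C c * X ^ n) ^ n - (1 + C γ * X ^ n) :=
    Polynomial.funext fun t ↦ by
      rw [eval_det, AlgEquiv.apply_symm_apply, hLeval, hdet]
      simp
  have hLW (k : ℕ) (hk : k ≤ n) : (L * W).coeff k = 0 := by
    have hdvd : X ^ (2 * n) ∣ (matPolyEquiv.symm L).det := by
      have h := sq_dvd_add_pow_sub_sub (C c * X ^ n) 1 n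
      have hnc : (C c * X ^ n) * (n : K[X]) = C γ * X ^ n := by
        rw [← C_eq_natCast, mul_right_comm, ← C_mul, div_mul_cancel₀ _ (Nat.cast_ne_zero.mpr hn)]
      rw [hdetL]
      refine dvd_trans ⟨C (c ^ 2), by rw [C_pow]; ring⟩ (h.trans (dvd_of_eq ?_))
      rw [one_pow, one_mul, hnc, one_pow]
      ring
    rw [← AlgEquiv.apply_symm_apply matPolyEquiv L, coeff_matPolyEquiv_mul_adjugate,
      X_pow_dvd_iff.mp hdvd k (by omega), zero_smul]
  have hLW_coeff (k : ℕ) : (L * W).coeff k = (1 - A) * W.coeff k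
      - (if 1 ≤ k then B * W.coeff (k - 1) else 0) + (if n ≤ k then c • W.coeff (k - n) else 0) := by
    simp only [L, sub_mul, add_mul, mul_assoc, coeff_add, coeff_sub, coeff_C_mul, coeff_X_pow_mul']
    split_ifs <;> simp
  refine ⟨W.coeff, ?_, fun k hk ↦ ?_, ?_⟩
  · rw [coeff_zero_matPolyEquiv_adjugate, AlgEquiv.apply_symm_apply]
    simp [L, hn.symm]
  · have h := hLW_coeff (k + 1)
    rw [hLW (k + 1) (by omega), if_pos (by omega), if_neg (by omega), add_zero,
      Nat.add_sub_cancel] at h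
    exact sub_eq_zero.mp h.symm
  · have h := hLW_coeff n
    rw [hLW n le_rfl, if_pos (by omega), if_pos le_rfl, Nat.sub_self] at h
    exact h.symm

theorem proj_mul_pow_mul_proj_of_det_eq (hn : n ≠ 0) {γ : K}
    (hdet : ∀ w t : K, (w • 1 - A - t • B).det = w ^ n - (1 + γ * t ^ n))
    (hP : P * P = P) (hPA : P * (A - 1) = 0) (hAP : (A - 1) * P = 0)
    (hTA : T * (A - 1) = 1 - P) :
    (∀ k < n - 1, P * (B * T) ^ k * B * P = 0) ∧
      P * (B * T) ^ (n - 1) * B * P = ((-1) ^ (n - 1) * (γ / n)) • P := by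
  obtain ⟨V, hV0, hV, hVn⟩ := exists_adjugate_coeffs_of_det_eq hn hdet
  have hPM : P * (1 - A) = 0 := by rw [← neg_sub, mul_neg, hPA, neg_zero]
  have hTM : T * (1 - A) = P - 1 := by rw [← neg_sub, mul_neg, hTA, neg_sub]
  have hlast : P * B * V (n - 1) = (γ / n) • (P * V 0) := by
    have h := congrArg (P * ·) hVn
    simp only [mul_add, mul_sub, ← mul_assoc, hPM, zero_mul, zero_sub, mul_zero,
      mul_smul_comm] at h
    exact neg_add_eq_zero.mp h
  have hV0P : V 0 * P = (n : K) • P := by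
    rw [hV0]
    exact adjugate_one_sub_mul_eq_smul (fun w ↦ by simpa [zero_pow hn] using hdet w 0) hAP
  exact proj_mul_pow_mul_proj_eq hP hPM hTM hV hlast hV0P (Nat.cast_ne_zero.mpr hn)

end Perturbation

theorem Polynomial.eq_of_monic_of_separable_of_isRoot {K : Type*} [Field K] {p q : K[X]}
    (hp : p.Monic) (hq : q.Monic) (hsep : q.Separable) (hsplit : q.Splits)
    (hdeg : p.natDegree ≤ q.natDegree) (h : ∀ z, q.IsRoot z → p.IsRoot z) : p = q := by
  refine eq_of_monic_of_dvd_of_natDegree_le hq hp (hsplit.dvd_of_roots_le_roots hq.ne_zero ?_) hdeg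
  refine (Multiset.le_iff_subset (nodup_roots hsep)).mpr fun z hz ↦ ?_
  exact (mem_roots hp.ne_zero).mpr (h z (isRoot_of_mem_roots hz))

theorem Matrix.charpoly_eq_X_pow_sub_C {K : Type*} [Field K] [IsAlgClosed K] {n : ℕ}
    {M : Matrix (Fin n) (Fin n) K} {c : K} (hn : (n : K) ≠ 0) (hc : c ≠ 0)
    (h : ∀ z, z ^ n = c → M.charpoly.IsRoot z) : M.charpoly = X ^ n - C c := by
  have hn0 : n ≠ 0 := by rintro rfl; exact hn Nat.cast_zero
  refine eq_of_monic_of_separable_of_isRoot M.charpoly_monic (monic_X_pow_sub_C c hn0)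
    (separable_X_pow_sub_C c hn hc) (IsAlgClosed.splits _) ?_ fun z hz ↦ h z ?_
  · rw [charpoly_natDegree_eq_dim, natDegree_X_pow_sub_C, Fintype.card_fin]
  · simpa [sub_eq_zero] using hz

theorem det_smul_one_sub_sub_smul_eq {n : ℕ} (hn : n ≠ 0) {A B : Matrix (Fin n) (Fin n) ℂ}
    {γ : ℂ} (h : ∀ x y : ℂ, x ^ n + γ * y ^ n = 1 → (x • A + y • B - 1).det = 0) (w t : ℂ) :
    (w • 1 - A - t • B).det = w ^ n - (1 + γ * t ^ n) := by
  have hcharpoly (t : ℂ) (ht : 1 + γ * t ^ n ≠ 0) :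
      (A + t • B).charpoly = X ^ n - C (1 + γ * t ^ n) := by
    refine charpoly_eq_X_pow_sub_C (Nat.cast_ne_zero.mpr hn) ht fun z hz ↦ ?_
    have hz0 : z ≠ 0 := by rintro rfl; rw [zero_pow hn] at hz; exact ht hz.symm
    have hscale : scalar _ z - (A + t • B) = (-z) • (z⁻¹ • A + (t * z⁻¹) • B - 1) := by
      rw [scalar_apply, ← smul_one_eq_diagonal]
      match_scalars <;> field_simp
    rw [IsRoot.def, eval_charpoly, hscale, det_smul, h _ _ ?_, mul_zero]
    rw [mul_pow, inv_pow]
    field_simp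
    linear_combination -hz
  have hdense : Dense {t : ℂ | 1 + γ * t ^ n ≠ 0} := by
    have hfin : {t : ℂ | (1 + C γ * X ^ n).IsRoot t}.Finite :=
      finite_setOfPred_isRoot fun h0 ↦ by simpa [hn.symm] using congrArg (coeff · 0) h0
    convert hfin.countable.dense_compl ℂ using 1
    ext t
    simp
  have hcont : Continuous fun t : ℂ ↦ (w • 1 - A - t • B).det := by fun_prop
  refine congrFun (hcont.ext_on hdense (g := fun t ↦ w ^ n - (1 + γ * t ^ n)) (by fun_prop)
    fun t ht ↦ ?_) t
  dsimp only
  rw [sub_sub, smul_one_eq_diagonal, ← scalar_apply, ← eval_charpoly, hcharpoly t ht]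
  simp

theorem stmt_11_general (n : ℕ) (hn : 2 ≤ n)
    (A B : Matrix (Fin n) (Fin n) ℂ)
    (hspec : {p : ℂ × ℂ × ℂ |
        (p.1 • A + p.2.1 • B + p.2.2 • (A * B) - 1).det = 0} =
      {p : ℂ × ℂ × ℂ |
        p.1 ^ n + p.2.1 ^ n + (-1 : ℂ) ^ (n - 1) * p.2.2 ^ n = 1})
    -- `P₀` is the orthogonal projection onto `ker (A - 1)`
    (P₀ : Matrix (Fin n) (Fin n) ℂ)
    (hP₀idem : P₀ * P₀ = P₀)
    (hP₀range : (A - 1) * P₀ = 0)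
    -- `T` is the reduced resolvent of `A` at the eigenvalue `1`
    (T : Matrix (Fin n) (Fin n) ℂ)
    (hT₁ : T * (A - 1) = 1 - P₀) (hT₂ : (A - 1) * T = 1 - P₀) :
    (∀ k : ℕ, k ≤ n - 2 → P₀ * (B * T) ^ k * B * P₀ = 0) ∧
    P₀ * (B * T) ^ (n - 1) * B * P₀ = ((-1 : ℂ) ^ (n - 1) / n) • P₀ ∧
    (∀ k : ℕ, k ≤ n - 2 → P₀ * (A * B * T) ^ k * (A * B) * P₀ = 0) ∧
    P₀ * (A * B * T) ^ (n - 1) * (A * B) * P₀ = ((1 : ℂ) / n) • P₀ := by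
  have hn0 : n ≠ 0 := by omega
  have hmem (p : ℂ × ℂ × ℂ) : (p.1 • A + p.2.1 • B + p.2.2 • (A * B) - 1).det = 0 ↔
      p.1 ^ n + p.2.1 ^ n + (-1) ^ (n - 1) * p.2.2 ^ n = 1 :=
    Set.ext_iff.mp hspec p
  have hdetB := det_smul_one_sub_sub_smul_eq hn0 (A := A) (B := B) (γ := 1) fun x y hxy ↦ by
    simpa [zero_pow hn0] using (hmem (x, y, 0)).mpr (by simpa [zero_pow hn0] using hxy)
  have hdetAB := det_smul_one_sub_sub_smul_eq hn0 (A := A) (B := A * B) (γ := (-1) ^ (n - 1))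
    fun x y hxy ↦ by
      simpa [zero_pow hn0] using (hmem (x, 0, y)).mpr (by simpa [zero_pow hn0] using hxy)
  have hP₀A := proj_mul_eq_zero_of_mul_proj_eq_zero hP₀idem hP₀range hT₁ hT₂
  obtain ⟨hB, hBlast⟩ := proj_mul_pow_mul_proj_of_det_eq hn0 hdetB hP₀idem hP₀A hP₀range hT₁
  obtain ⟨hAB, hABlast⟩ := proj_mul_pow_mul_proj_of_det_eq hn0 hdetAB hP₀idem hP₀A hP₀range hT₁
  refine ⟨fun k hk ↦ hB k (by omega), ?_, fun k hk ↦ hAB k (by omega), ?_⟩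
  · rw [hBlast, mul_one_div]
  · rw [hABlast, ← mul_div_assoc, ← mul_pow, neg_one_mul, neg_neg, one_pow]

theorem stmt_11 (n : ℕ) (hn : 2 ≤ n)
    (A B : Matrix (Fin n) (Fin n) ℂ)
    (hA : A * Aᴴ = Aᴴ * A)
    (hB : ‖Matrix.toEuclideanCLM (𝕜 := ℂ) B‖ = 1)
    (hspec : {p : ℂ × ℂ × ℂ |
        (p.1 • A + p.2.1 • B + p.2.2 • (A * B) - 1).det = 0} =
      {p : ℂ × ℂ × ℂ |
        p.1 ^ n + p.2.1 ^ n + (-1 : ℂ) ^ (n - 1) * p.2.2 ^ n = 1})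
    -- `P₀` is the orthogonal projection onto `ker (A - 1)`
    (P₀ : Matrix (Fin n) (Fin n) ℂ)
    (hP₀herm : P₀ᴴ = P₀) (hP₀idem : P₀ * P₀ = P₀)
    (hP₀range : (A - 1) * P₀ = 0)
    (hP₀ker : ∀ v : Fin n → ℂ, (A - 1).mulVec v = 0 → P₀.mulVec v = v)
    -- `T` is the reduced resolvent of `A` at the eigenvalue `1`
    (T : Matrix (Fin n) (Fin n) ℂ)
    (hTP₀ : T * P₀ = 0) (hP₀T : P₀ * T = 0)
    (hT₁ : T * (A - 1) = 1 - P₀) (hT₂ : (A - 1) * T = 1 - P₀) :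
    (∀ k : ℕ, k ≤ n - 2 → P₀ * (B * T) ^ k * B * P₀ = 0) ∧
    P₀ * (B * T) ^ (n - 1) * B * P₀ = ((-1 : ℂ) ^ (n - 1) / n) • P₀ ∧
    (∀ k : ℕ, k ≤ n - 2 → P₀ * (A * B * T) ^ k * (A * B) * P₀ = 0) ∧
    P₀ * (A * B * T) ^ (n - 1) * (A * B) * P₀ = ((1 : ℂ) / n) • P₀ :=
  stmt_11_general n hn A B hspec P₀ hP₀idem hP₀range T hT₁ hT₂
end

section
/- Let ω = exp(2πi/3), A₃ = diag(1, ω, ω²) ∈ M₃(ℂ), B̂₃ = [[0,0,1],[1,0,0],[0,1,0]] and B̂̂₃ = [[0,1,0],[0,0,1],[1,0,0]]. Then: (i) for all (x,y) ∈ ℂ², det(x·A₃ + y·B̂₃ − I) = 0 if and only if x³ + y³ = 1, and likewise det(x·A₃ + y·B̂̂₃ − I) = 0 if and only if x³ + y³ = 1; (ii) nevertheless there is no invertible matrix S ∈ M₃(ℂ) with S·A₃ = A₃·S and S·B̂₃ = B̂̂₃·S; in particular the pairs (A₃, B̂₃) and (A₃, B̂̂₃) have equal proper projective joint spectra but are not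 simultaneously similar. -/
open Matrix Complex

noncomputable section

theorem stmt_16
    (ω : ℂ) (hω : ω = Complex.exp (2 * Real.pi * Complex.I / 3))
    (A₃ Bhat Bhathat : Matrix (Fin 3) (Fin 3) ℂ)
    (hA₃ : A₃ = Matrix.diagonal ![1, ω, ω ^ 2])
    (hBhat : Bhat = !![0,0,1; 1,0,0; 0,1,0])
    (hBhathat : Bhathat = !![0,1,0; 0,0,1; 1,0,0]) :
    (∀ x y : ℂ, (x • A₃ + y • Bhat - 1).det = 0 ↔ x ^ 3 + y ^ 3 = 1) ∧
    (∀ x y : ℂ, (x • A₃ + y • Bhathat - 1).det = 0 ↔ x ^ 3 + y ^ 3 = 1) ∧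
    ¬ ∃ S : Matrix (Fin 3) (Fin 3) ℂ, IsUnit S ∧
      S * A₃ = A₃ * S ∧ S * Bhat = Bhathat * S := by
  have hω3 : ω ^ 3 = 1 := by
    rw [hω, ← Complex.exp_nat_mul]
    rw [show (3 : ℕ) * (2 * (Real.pi : ℂ) * Complex.I / 3) = 2 * Real.pi * Complex.I by
      push_cast; ring]
    exact Complex.exp_two_pi_mul_I
  have hω0 : ω ≠ 0 := by rw [hω]; exact Complex.exp_ne_zero _
  have hω1 : ω ≠ 1 := by
    intro h
    have h2 : ω = Complex.exp (((2 * Real.pi / 3 : ℝ) : ℂ) * Complex.I) := by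
      rw [hω]; push_cast; ring_nf
    have him : ω.im = Real.sin (2 * Real.pi / 3) := by
      rw [h2, Complex.exp_ofReal_mul_I_im]
    have hpos : 0 < Real.sin (2 * Real.pi / 3) := by
      apply Real.sin_pos_of_pos_of_lt_pi <;> nlinarith [Real.pi_pos]
    rw [h] at him; simp at him; linarith
  have hω2 : ω ^ 2 ≠ 1 := by
    intro h
    apply hω1
    calc ω = ω ^ 3 * ω := by rw [hω3, one_mul]
    _ = (ω ^ 2) ^ 2 := by ring
    _ = 1 := by rw [h, one_pow]
  have hsum : ω ^ 2 + ω + 1 = 0 := by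
    rcases mul_eq_zero.mp (show (ω - 1) * (ω ^ 2 + ω + 1) = 0 by linear_combination hω3)
      with h | h
    · exact absurd (sub_eq_zero.mp h) hω1
    · exact h
  subst hA₃ hBhat hBhathat
  refine ⟨fun x y => ?_, fun x y => ?_, ?_⟩
  · have hM : x • Matrix.diagonal ![1, ω, ω ^ 2]
        + y • (!![0,0,1; 1,0,0; 0,1,0] : Matrix (Fin 3) (Fin 3) ℂ) - 1
        = !![x-1, 0, y; y, x*ω-1, 0; 0, y, x*ω^2-1] := by
      ext i j
      fin_cases i <;> fin_cases j <;>
        simp [Matrix.one_apply, Matrix.diagonal, Matrix.vecHead, Matrix.vecTail]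
    have hdet : (x • Matrix.diagonal ![1, ω, ω ^ 2]
        + y • (!![0,0,1; 1,0,0; 0,1,0] : Matrix (Fin 3) (Fin 3) ℂ) - 1).det
        = x ^ 3 + y ^ 3 - 1 := by
      rw [hM, Matrix.det_fin_three]
      simp
      linear_combination (x ^ 3 - x ^ 2) * hω3 + (x - x ^ 2) * hsum
    rw [hdet, sub_eq_zero]
  · have hM : x • Matrix.diagonal ![1, ω, ω ^ 2]
        + y • (!![0,1,0; 0,0,1; 1,0,0] : Matrix (Fin 3) (Fin 3) ℂ) - 1
        = !![x-1, y, 0; 0, x*ω-1, y; y, 0, x*ω^2-1] := by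
      ext i j
      fin_cases i <;> fin_cases j <;>
        simp [Matrix.one_apply, Matrix.diagonal, Matrix.vecHead, Matrix.vecTail]
    have hdet : (x • Matrix.diagonal ![1, ω, ω ^ 2]
        + y • (!![0,1,0; 0,0,1; 1,0,0] : Matrix (Fin 3) (Fin 3) ℂ) - 1).det
        = x ^ 3 + y ^ 3 - 1 := by
      rw [hM, Matrix.det_fin_three]
      simp
      linear_combination (x ^ 3 - x ^ 2) * hω3 + (x - x ^ 2) * hsum
    rw [hdet, sub_eq_zero]
  · rintro ⟨S, hS, hSA, hSB⟩
    have e01 := congrFun (congrFun hSA 0) 1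
    have e02 := congrFun (congrFun hSA 0) 2
    have e12 := congrFun (congrFun hSA 1) 2
    have f02 := congrFun (congrFun hSB 0) 2
    simp [Matrix.mul_apply, Fin.sum_univ_three, Matrix.diagonal, Matrix.vecHead,
      Matrix.vecTail] at e01 e02 e12 f02
    have h01 : S 0 1 = 0 := by
      rcases mul_eq_zero.mp (show S 0 1 * (ω - 1) = 0 by linear_combination e01) with h | h
      · exact h
      · exact absurd (sub_eq_zero.mp h) hω1
    have h02 : S 0 2 = 0 := by
      rcases mul_eq_zero.mp (show S 0 2 * (ω ^ 2 - 1) = 0 by linear_combination e02) with h | h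
      · exact h
      · exact absurd (sub_eq_zero.mp h) hω2
    have h12 : S 1 2 = 0 := by
      rcases mul_eq_zero.mp (show S 1 2 * (ω * (ω - 1)) = 0 by linear_combination e12)
        with h | h
      · exact h
      · rcases mul_eq_zero.mp h with h | h
        · exact absurd h hω0
        · exact absurd (sub_eq_zero.mp h) hω1
    have h00 : S 0 0 = 0 := by linear_combination f02 + h12
    have hdet : S.det = 0 := by
      rw [Matrix.det_fin_three, h00, h01, h02]; ring
    rw [Matrix.isUnit_iff_isUnit_det, hdet] at hS
    simp at hS
end
end
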